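/- Let R be a reduced elliptic root system of rank l with fundamental-set Π ∪ {a} and associated maps k and g. Then R = ⋃_{w∈W_Π} ⋃_{α∈Π} ((w(α) + ℤk(α)a) ∪ (w(2α) + g(α)k(α)a)), where the set w(2α) + g(α)k(α)a is empty if g(α) = ∅ and equals {w(2α) + mk(α)a : m an odd integer} if g(α) = 2ℤ+1. -/

import Mathlib

/- ## Preliminaries: extended affine root systems (Saito) -/

noncomputable section

open Set

/-- The reflection `s_v : z ↦ z - (v^∨, z) v = z - (2 (v,z)/(v,v)) v` associated to a
bilinear form `B` and a vector `v`.  (When `B v v = 0` this is the identity, by the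
`division by zero = 0` convention; reflections are only ever used at non-isotropic `v`.) -/
def srefl {V : Type*} [AddCommGroup V] [Module ℝ V]
    (B : LinearMap.BilinForm ℝ V) (v : V) : Module.End ℝ V :=
  LinearMap.id - (((2 * (B v v)⁻¹) • (B v)).smulRight v)

/-- The Weyl group `W_S` generated by the reflections in the elements of `S`
(realized as the multiplicative closure; each generator is an involution, so this
agrees with the generated group). -/
def weyl {V : Type*} [AddCommGroup V] [Module ℝ V]
    (B : LinearMap.BilinForm ℝ V) (S : Set V) : Submonoid (Module.End ℝ V) :=
  Submonoid.closure (srefl B '' S)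

/-- The orbit `W_S · α`. -/
def worbit {V : Type*} [AddCommGroup V] [Module ℝ V]
    (B : LinearMap.BilinForm ℝ V) (S : Set V) (α : V) : Set V :=
  {v | ∃ w ∈ weyl B S, w α = v}

/-- `V⁰`, the set of isotropic vectors. -/
def nullSet {V : Type*} [AddCommGroup V] [Module ℝ V]
    (B : LinearMap.BilinForm ℝ V) : Set V := {v | B v v = 0}

/-- `ℤR`, the subgroup of `V` generated by `R`. -/
def zspan {V : Type*} [AddCommGroup V] (R : Set V) : AddSubgroup V :=
  AddSubgroup.closure R

/-- `ℤ≥0 Π`, the set of nonnegative-integer linear combinations of elements of `Π`. -/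
def nnspan {V : Type*} [AddCommMonoid V] (P : Set V) : Set V :=
  (AddSubmonoid.closure P : Set V)

/-- `(R, V)` is an `n`-extended affine root system of rank `l` (K. Saito). -/
structure IsEARS {V : Type*} [AddCommGroup V] [Module ℝ V]
    (B : LinearMap.BilinForm ℝ V) (R : Set V) (l n : ℕ) : Prop where
  rank_pos : 1 ≤ l
  findim : FiniteDimensional ℝ V
  symm : ∀ u v, B u v = B v u
  posSemidef : ∀ v, 0 ≤ B v v
  dim_eq : Module.finrank ℝ V = l + n
  null_eq : nullSet B = (LinearMap.ker B : Set V)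
  dim_null : Module.finrank ℝ (LinearMap.ker B) = n
  /-- (AX1), first half -/
  root_nonisotropic : ∀ α ∈ R, B α α ≠ 0
  /-- (AX1), second half -/
  span_eq_top : Submodule.span ℝ R = ⊤
  /-- (AX2) -/
  free : Module.Free ℤ (zspan R)
  /-- (AX2) -/
  rank_eq : Module.finrank ℤ (zspan R) = l + n
  /-- (AX3): `(α^∨, β) ∈ ℤ` -/
  integral : ∀ α ∈ R, ∀ β ∈ R, ∃ m : ℤ, 2 * B α β = (m : ℝ) * B α α
  /-- (AX4) -/
  reflect : ∀ α ∈ R, srefl B α '' R = R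
  /-- (AX5) -/
  connected : ∀ S' ⊆ R, S'.Nonempty → S' ≠ R → ∃ x ∈ S', ∃ y ∈ R \ S', B x y ≠ 0

/-- `R` is reduced, i.e. `R ∩ 2R = ∅`. -/
def IsReducedRS {V : Type*} [AddCommGroup V] [Module ℝ V] (R : Set V) : Prop :=
  ∀ α ∈ R, (2 : ℤ) • α ∉ R

/-- `Π₀` is a base (with `m` elements) of the root system `R₀`:
`Π₀ ⊆ R₀`, `Π₀` consists of `m` linearly independent elements, and
`R₀ = (R₀ ∩ ℤ≥0 Π₀) ∪ (R₀ ∩ ℤ≤0 Π₀)`. -/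
def IsBaseSet {M : Type*} [AddCommGroup M] [Module ℝ M] (R₀ P₀ : Set M) (m : ℕ) : Prop :=
  P₀ ⊆ R₀ ∧ P₀.Finite ∧ P₀.ncard = m ∧
  LinearIndependent ℝ ((↑) : P₀ → M) ∧
  R₀ = (R₀ ∩ nnspan P₀) ∪ (R₀ ∩ (-(nnspan P₀)))

/-- The bilinear form induced on a quotient `V ⧸ W` by a form vanishing on `W`. -/
def quotForm {V : Type*} [AddCommGroup V] [Module ℝ V]
    (W : Submodule ℝ V) (B : LinearMap.BilinForm ℝ V)
    (h1 : ∀ w ∈ W, B w = 0) (h2 : ∀ v : V, ∀ w ∈ W, B v w = 0) :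
    LinearMap.BilinForm ℝ (V ⧸ W) :=
  Submodule.liftQ W
    { toFun := fun v => Submodule.liftQ W (B v) (fun w hw => LinearMap.mem_ker.mpr (h2 v w hw))
      map_add' := fun u v => by
        ext x
        simp
      map_smul' := fun c v => by
        ext x
        simp }
    (fun w hw => by
      simp only [LinearMap.mem_ker]
      ext x
      simp [h1 w hw])

end

/-- A fundamental-set `Π ∪ {a}` of a reduced elliptic root system `R` of rank `l`:
(FS1) `a ∈ (ℤR)⁰` and `(ℤR)⁰ = ℤa ⊕ ℤb` for some `b`;
(FS2) `|Π| = l+1`, `Π ⊆ R` and `π_a(Π)` is a base of the affine root system `π_a(R)`. -/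
def IsFundamentalSet {V : Type*} [AddCommGroup V] [Module ℝ V]
    (B : LinearMap.BilinForm ℝ V) (R : Set V) (l : ℕ) (P : Set V) (a : V) : Prop :=
  a ∈ zspan R ∧ B a a = 0 ∧
  (∃ b : V, b ∈ zspan R ∧ B b b = 0 ∧
    ((zspan R : Set V) ∩ nullSet B = {v | ∃ m n : ℤ, v = m • a + n • b}) ∧
    (∀ m n : ℤ, m • a + n • b = 0 → m = 0 ∧ n = 0)) ∧
  P ⊆ R ∧ P.Finite ∧ P.ncard = l + 1 ∧
  IsBaseSet ((Submodule.span ℝ {a}).mkQ '' R) ((Submodule.span ℝ {a}).mkQ '' P) (l + 1)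

/-- The subset `⋃_{ε=±1} ((εα + ℤ kα a) ∪ (2εα + gα·kα a))` of the plane `ℝα ⊕ ℝa`;
here `gα : Bool`, with `false` encoding `g(α) = ∅` and `true` encoding `g(α) = 2ℤ+1`. -/
def kgLine {V : Type*} [AddCommGroup V] (a α : V) (kα : ℕ) (gα : Bool) : Set V :=
  {v | ∃ ε m : ℤ, (ε = 1 ∨ ε = -1) ∧ v = ε • α + (m * kα) • a} ∪
  {v | gα = true ∧ ∃ ε m : ℤ, (ε = 1 ∨ ε = -1) ∧ Odd m ∧ v = (2 * ε) • α + (m * kα) • a}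

/-- `k : Π → ℕ` and `g : Π → {∅, 2ℤ+1}` are the maps associated to the fundamental-set
`Π ∪ {a}`, i.e. `R ∩ (ℝα ⊕ ℝa) = ⋃_{ε=±1} ((εα + ℤ k(α) a) ∪ (2εα + g(α)k(α)a))`. -/
def IsKG {V : Type*} [AddCommGroup V] [Module ℝ V]
    (R : Set V) (a : V) (P : Set V) (k : V → ℕ) (g : V → Bool) : Prop :=
  ∀ α ∈ P, 0 < k α ∧
    R ∩ (Submodule.span ℝ {α, a} : Set V) = kgLine a α (k α) (g α)

/-- `c(α) = 1` if `g(α) = ∅`, `c(α) = 2` if `g(α) = 2ℤ+1`. -/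
def cMap {V : Type*} (g : V → Bool) (α : V) : ℕ := if g α then 2 else 1

/-- `α* := c(α)·α + k(α)·a`. -/
def starMap {V : Type*} [AddCommGroup V] (a : V) (k : V → ℕ) (g : V → Bool) (α : V) : V :=
  (cMap g α : ℤ) • α + (k α : ℤ) • a

/-- `B₊ := {α, α* | α ∈ Π}`. -/
def bplus {V : Type*} [AddCommGroup V] (a : V) (P : Set V) (k : V → ℕ) (g : V → Bool) :
    Set V :=
  P ∪ (starMap a k g '' P)

/-- `B := B₊ ∪ (−B₊)`. -/
def bfull {V : Type*} [AddCommGroup V] (a : V) (P : Set V) (k : V → ℕ) (g : V → Bool) :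
    Set V :=
  bplus a P k g ∪ (-(bplus a P k g))

/-- The set `R(Π,k,g) = ⋃_{w ∈ W_Π} ⋃_{α ∈ Π} ((w(α) + ℤk(α)a) ∪ (w(2α) + g(α)k(α)a))`. -/
def kgUnion {V : Type*} [AddCommGroup V] [Module ℝ V]
    (B : LinearMap.BilinForm ℝ V) (P : Set V) (a : V) (k : V → ℕ) (g : V → Bool) :
    Set V :=
  {v | ∃ w ∈ weyl B P, ∃ α ∈ P,
    (∃ m : ℤ, v = w α + (m * k α) • a) ∨
    (g α = true ∧ ∃ m : ℤ, Odd m ∧ v = w ((2 : ℤ) • α) + (m * k α) • a)}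

/-!
Modulo `ℝa` every root `β` is, up to sign, a nonnegative integer combination `∑ nᵢ αᵢ` of
`Π`. As `a` is isotropic, `0 < (β, β) = ∑ nᵢ (αᵢ, β)`, so some `αᵢ` in the support pairs
positively with `β`. Then `s_{αᵢ} β = β - m αᵢ` with `m ≥ 1`; by linear independence of `π_a(Π)`
this either has smaller height `∑ nⱼ`, or forces `β ∈ ℝαᵢ ⊕ ℝa`. Hence every root is
`W_Π`-conjugate to a root of some plane `ℝα ⊕ ℝa` (`α ∈ Π`), where `k` and `g` describe `R`;
conversely `W_Π` fixes `a` and preserves `R`.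
-/

section Reflection

variable {V : Type*} [AddCommGroup V] [Module ℝ V] (B : LinearMap.BilinForm ℝ V) {v z : V}

lemma srefl_apply (v z : V) : srefl B v z = z - (2 * (B v v)⁻¹ * B v z) • v := by
  simp [srefl, mul_assoc]

lemma srefl_self (hv : B v v ≠ 0) : srefl B v v = -v := by
  rw [srefl_apply, mul_assoc, inv_mul_cancel₀ hv, mul_one, two_smul]
  abel

lemma srefl_apply_of_eq_zero (hz : B v z = 0) : srefl B v z = z := by
  rw [srefl_apply, hz, mul_zero, zero_smul, sub_zero]

lemma srefl_apply_of_two_mul_eq {m : ℤ} (hv : B v v ≠ 0) (h : 2 * B v z = m * B v v) :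
    srefl B v z = z - m • v := by
  rw [srefl_apply, ← Int.cast_smul_eq_zsmul ℝ]
  congr 2
  field_simp
  linarith

lemma srefl_srefl (hv : B v v ≠ 0) (z : V) : srefl B v (srefl B v z) = z := by
  have hpair : B v (srefl B v z) = -B v z := by
    rw [srefl_apply, map_sub, map_smul, smul_eq_mul]
    field_simp
    ring
  rw [srefl_apply B v (srefl B v z), hpair, srefl_apply]
  module

lemma neg_mem_of_srefl_image_eq {R : Set V} (hv : v ∈ R) (hvv : B v v ≠ 0)
    (hR : srefl B v '' R = R) : -v ∈ R :=
  srefl_self B hvv ▸ hR.subset (Set.mem_image_of_mem _ hv)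

end Reflection

section Weyl

variable {V : Type*} [AddCommGroup V] [Module ℝ V] {B : LinearMap.BilinForm ℝ V} {P : Set V}
  {w : Module.End ℝ V}

lemma srefl_mem_weyl {α : V} (hα : α ∈ P) : srefl B α ∈ weyl B P :=
  Submonoid.subset_closure (Set.mem_image_of_mem _ hα)

lemma weyl_apply_of_forall_eq_zero {a : V} (ha : ∀ α ∈ P, B α a = 0) (hw : w ∈ weyl B P) :
    w a = a :=
  Submonoid.closure_le (S := MulAction.stabilizerSubmonoid (Module.End ℝ V) a)
    |>.2 (by rintro _ ⟨α, hα, rfl⟩; exact srefl_apply_of_eq_zero B (ha α hα)) hw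

lemma weyl_mapsTo {R : Set V} (hR : ∀ α ∈ P, srefl B α '' R = R) (hw : w ∈ weyl B P) :
    Set.MapsTo w R R := by
  induction hw using Submonoid.closure_induction with
  | mem _ hs =>
    obtain ⟨α, hα, rfl⟩ := hs
    exact Set.mapsTo_iff_image_subset.2 (hR α hα).subset
  | one => exact Set.mapsTo_id R
  | mul _ _ _ _ hx hy => exact hx.comp hy

lemma exists_weyl_apply_eq_sign_smul {α : V} (hα : α ∈ P) (hαα : B α α ≠ 0) {ε : ℤ}
    (hε : ε = 1 ∨ ε = -1) : ∃ s ∈ weyl B P, s α = ε • α := by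
  rcases hε with rfl | rfl
  · exact ⟨1, one_mem _, (one_zsmul α).symm⟩
  · exact ⟨srefl B α, srefl_mem_weyl hα, by rw [srefl_self B hαα, neg_one_zsmul]⟩

lemma mem_kgUnion_iff {a : V} {k : V → ℕ} {g : V → Bool} (hP : ∀ α ∈ P, B α α ≠ 0)
    (ha : ∀ α ∈ P, B α a = 0) {v : V} :
    v ∈ kgUnion B P a k g ↔ ∃ w ∈ weyl B P, ∃ α ∈ P, ∃ γ ∈ kgLine a α (k α) (g α), w γ = v := by
  constructor
  · rintro ⟨w, hw, α, hα, ⟨m, rfl⟩ | ⟨hg, m, hm, rfl⟩⟩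
    · refine ⟨w, hw, α, hα, α + (m * k α) • a, Or.inl ⟨1, m, Or.inl rfl, by rw [one_zsmul]⟩, ?_⟩
      rw [map_add, map_zsmul, weyl_apply_of_forall_eq_zero ha hw]
    · refine ⟨w, hw, α, hα, (2 : ℤ) • α + (m * k α) • a,
        Or.inr ⟨hg, 1, m, Or.inl rfl, hm, by rw [mul_one]⟩, ?_⟩
      rw [map_add, map_zsmul w (m * k α), weyl_apply_of_forall_eq_zero ha hw]
  · rintro ⟨w, hw, α, hα, γ, ⟨ε, m, hε, rfl⟩ | ⟨hg, ε, m, hε, hm, rfl⟩, rfl⟩ <;>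
      obtain ⟨s, hs, hsα⟩ := exists_weyl_apply_eq_sign_smul hα (hP α hα) hε <;>
      refine ⟨w * s, mul_mem hw hs, α, hα, ?_⟩
    · refine Or.inl ⟨m, ?_⟩
      rw [Module.End.mul_apply, hsα, map_add, map_zsmul w (m * k α),
        weyl_apply_of_forall_eq_zero ha hw]
    · refine Or.inr ⟨hg, m, hm, ?_⟩
      rw [Module.End.mul_apply, map_zsmul, hsα, map_add, map_zsmul w (m * k α),
        weyl_apply_of_forall_eq_zero ha hw, mul_zsmul, map_zsmul]

end Weyl

lemma exists_nsmul_sum_eq_of_mem_nnspan {V M : Type*} [AddCommMonoid M] {P : Set V} [Fintype P]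
    (f : V → M) {x : M} (hx : x ∈ nnspan (f '' P)) : ∃ n : P → ℕ, x = ∑ i, n i • f i := by
  rw [nnspan, Set.image_eq_range] at hx
  exact AddSubmonoid.mem_closure_range_iff_of_fintype.1 hx

lemma LinearIndependent.eq_add_single_of_sum_nsmul_eq {ι M : Type*} [Fintype ι] [DecidableEq ι]
    [AddCommMonoid M] {e : ι → M} (he : LinearIndependent ℕ e) {n p : ι → ℕ} {i : ι} {m : ℕ}
    (h : ∑ j, n j • e j = ∑ j, p j • e j + m • e i) : n = p + Pi.single i m := by
  refine funext (Fintype.linearIndependent_iffₛ.1 he _ _ ?_)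
  simp only [Pi.add_apply, add_smul, Finset.sum_add_distrib, Pi.single_apply, ite_smul,
    zero_smul, Finset.sum_ite_eq', Finset.mem_univ, if_true, h]

section IsBaseSet

variable {V M : Type*} [AddCommGroup M] [Module ℝ M]
  {R P : Set V} {f : V → M} {m : ℕ}

lemma IsBaseSet.linearIndependent_restrict (h : IsBaseSet (f '' R) (f '' P) m) (hP : P.Finite)
    (hcard : P.ncard = m) : LinearIndependent ℝ (fun i : P => f i) :=
  LinearIndepOn.comp_of_image (f := f) (v := id) h.2.2.2.1
    ((Set.ncard_image_iff hP).1 (h.2.2.1.trans hcard.symm))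

lemma IsBaseSet.subset_union_neg {R₀ P₀ : Set M} (h : IsBaseSet R₀ P₀ m) :
    R₀ ⊆ nnspan P₀ ∪ -nnspan P₀ := by
  intro x hx
  rw [h.2.2.2.2] at hx
  exact hx.imp And.right And.right

end IsBaseSet

section Conjugation

variable {V : Type*} [AddCommGroup V] [Module ℝ V] {B : LinearMap.BilinForm ℝ V} {R P : Set V}
  {Q : Submodule ℝ V}

lemma exists_pos_pairing_of_mkQ_eq_sum [Fintype P] (hQ : Q ≤ LinearMap.ker B) {β : V}
    (hβ : 0 < B β β) {n : P → ℕ} (hn : Q.mkQ β = ∑ i, n i • Q.mkQ i) :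
    ∃ i, 0 < n i ∧ 0 < B i β := by
  have hsub : β - ∑ i, n i • (i : V) ∈ Q := by
    rw [← Submodule.Quotient.eq, ← Submodule.mkQ_apply, ← Submodule.mkQ_apply, hn, map_sum]
    simp only [map_nsmul]
  have hβsum : B β β = ∑ i, n i • B i β := by
    have := LinearMap.congr_fun (hQ hsub) β
    simp only [map_sub, map_sum, map_nsmul, LinearMap.sub_apply,
      LinearMap.sum_apply, LinearMap.smul_apply, LinearMap.zero_apply, sub_eq_zero] at this
    exact this
  obtain ⟨i, -, hi⟩ := Finset.exists_lt_of_sum_lt (f := 0) (g := fun i => (n i : ℝ) * B i β)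
    (s := Finset.univ) (by simpa [hβsum, nsmul_eq_mul] using hβ)
  rw [Pi.zero_apply] at hi
  exact ⟨i, Nat.pos_of_ne_zero (by rintro h; simp [h] at hi),
    pos_of_mul_pos_right hi (Nat.cast_nonneg _)⟩

lemma exists_srefl_height_lt_or_mem_sup [Fintype P] (hpos : ∀ β ∈ R, 0 < B β β)
    (hint : ∀ α ∈ R, ∀ β ∈ R, ∃ m : ℤ, 2 * B α β = m * B α α)
    (hrefl : ∀ α ∈ R, srefl B α '' R = R) (hQ : Q ≤ LinearMap.ker B) (hPR : P ⊆ R)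
    (hind : LinearIndependent ℕ (fun i : P => Q.mkQ i))
    (hcone : Q.mkQ '' R ⊆ nnspan (Q.mkQ '' P) ∪ -nnspan (Q.mkQ '' P))
    {β : V} (hβ : β ∈ R) {n : P → ℕ} (hn : Q.mkQ β = ∑ i, n i • Q.mkQ i) :
    ∃ i : P, β ∈ (ℝ ∙ (i : V)) ⊔ Q ∨
      ∃ p : P → ℕ, Q.mkQ (srefl B i β) = ∑ j, p j • Q.mkQ j ∧ ∑ j, p j < ∑ j, n j := by
  classical
  obtain ⟨i, hni, hiβ⟩ := exists_pos_pairing_of_mkQ_eq_sum hQ (hpos β hβ) hn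
  have hiR : (i : V) ∈ R := hPR i.2
  obtain ⟨m, hm⟩ := hint i hiR β hβ
  have hm_pos : 0 < m := by
    have : (0 : ℝ) < m * B i i := by rw [← hm]; positivity
    exact_mod_cast pos_of_mul_pos_left this (hpos i hiR).le
  lift m to ℕ using hm_pos.le
  have hπγ : Q.mkQ β = Q.mkQ (srefl B i β) + m • Q.mkQ i := by
    rw [srefl_apply_of_two_mul_eq B (hpos i hiR).ne' hm, map_sub, map_zsmul, natCast_zsmul]
    abel
  refine ⟨i, ?_⟩
  rcases hcone (Set.mem_image_of_mem _ ((hrefl i hiR).subset (Set.mem_image_of_mem _ hβ)))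
    with hγ_pos | hγ_neg
  · obtain ⟨p, hp⟩ := exists_nsmul_sum_eq_of_mem_nnspan _ hγ_pos
    have hnp : n = p + Pi.single i m :=
      hind.eq_add_single_of_sum_nsmul_eq (by rw [← hn, hπγ, hp])
    refine Or.inr ⟨p, hp, ?_⟩
    rw [hnp]
    simp only [Pi.add_apply, Finset.sum_add_distrib, Finset.sum_pi_single', Finset.mem_univ,
      if_true]
    omega
  · obtain ⟨p, hp⟩ := exists_nsmul_sum_eq_of_mem_nnspan _ (Set.mem_neg.1 hγ_neg)
    have hsum : ∑ j, n j • Q.mkQ j + ∑ j, p j • Q.mkQ j = m • Q.mkQ i := by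
      rw [← hn, ← hp, hπγ]
      abel
    have hnp : n + p = 0 + Pi.single i m :=
      hind.eq_add_single_of_sum_nsmul_eq (by simpa [add_smul, Finset.sum_add_distrib] using hsum)
    have hn_single : ∀ j ≠ i, n j = 0 := fun j hj => by
      have := congrFun hnp j
      simp only [Pi.add_apply, Pi.zero_apply, Pi.single_apply, hj, if_false] at this
      omega
    have hβi : Q.mkQ β = Q.mkQ (n i • (i : V)) := by
      rw [hn, Finset.sum_eq_single i (fun j _ hj => by rw [hn_single j hj, zero_smul]) (by simp),
        map_nsmul]
    rw [Submodule.mkQ_apply, Submodule.mkQ_apply, Submodule.Quotient.eq] at hβi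
    exact Or.inl (Submodule.mem_sup.2 ⟨_, nsmul_mem (Submodule.mem_span_singleton_self _) _, _,
      hβi, add_sub_cancel _ _⟩)

lemma exists_weyl_apply_eq_of_mkQ_eq_sum [Fintype P] (hpos : ∀ β ∈ R, 0 < B β β)
    (hint : ∀ α ∈ R, ∀ β ∈ R, ∃ m : ℤ, 2 * B α β = m * B α α)
    (hrefl : ∀ α ∈ R, srefl B α '' R = R) (hQ : Q ≤ LinearMap.ker B) (hPR : P ⊆ R)
    (hind : LinearIndependent ℕ (fun i : P => Q.mkQ i))
    (hcone : Q.mkQ '' R ⊆ nnspan (Q.mkQ '' P) ∪ -nnspan (Q.mkQ '' P))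
    {β : V} (hβ : β ∈ R) {n : P → ℕ} (hn : Q.mkQ β = ∑ i, n i • Q.mkQ i) :
    ∃ w ∈ weyl B P, ∃ α ∈ P, ∃ γ ∈ R, γ ∈ (ℝ ∙ α) ⊔ Q ∧ w γ = β := by
  induction hN : ∑ i, n i using Nat.strong_induction_on generalizing β n with
  | _ N IH =>
  obtain ⟨i, hβi | ⟨p, hp, hlt⟩⟩ :=
    exists_srefl_height_lt_or_mem_sup hpos hint hrefl hQ hPR hind hcone hβ hn
  · exact ⟨1, one_mem _, i, i.2, β, hβ, hβi, rfl⟩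
  have hiR : (i : V) ∈ R := hPR i.2
  obtain ⟨w, hw, α, hα, γ, hγR, hγ, hwγ⟩ :=
    IH _ (hN ▸ hlt) ((hrefl i hiR).subset (Set.mem_image_of_mem _ hβ)) hp rfl
  refine ⟨srefl B i * w, mul_mem (srefl_mem_weyl i.2) hw, α, hα, γ, hγR, hγ, ?_⟩
  rw [Module.End.mul_apply, hwγ, srefl_srefl B (hpos i hiR).ne']
lemma exists_weyl_apply_eq (hpos : ∀ β ∈ R, 0 < B β β)
    (hint : ∀ α ∈ R, ∀ β ∈ R, ∃ m : ℤ, 2 * B α β = m * B α α)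
    (hrefl : ∀ α ∈ R, srefl B α '' R = R) (hQ : Q ≤ LinearMap.ker B) (hPR : P ⊆ R)
    (hP : P.Finite) (hind : LinearIndependent ℝ (fun i : P => Q.mkQ i))
    (hcone : Q.mkQ '' R ⊆ nnspan (Q.mkQ '' P) ∪ -nnspan (Q.mkQ '' P))
    {β : V} (hβ : β ∈ R) :
    ∃ w ∈ weyl B P, ∃ α ∈ P, ∃ γ ∈ R, γ ∈ (ℝ ∙ α) ⊔ Q ∧ w γ = β := by
  have := hP.fintype
  have neg_mem_R {γ : V} (hγ : γ ∈ R) : -γ ∈ R :=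
    neg_mem_of_srefl_image_eq B hγ (hpos γ hγ).ne' (hrefl γ hγ)
  have key {γ : V} (hγ : γ ∈ R) {n : P → ℕ} (hn : Q.mkQ γ = ∑ i, n i • Q.mkQ i) :=
    exists_weyl_apply_eq_of_mkQ_eq_sum hpos hint hrefl hQ hPR (hind.restrict_scalars' ℕ) hcone
      hγ hn
  rcases hcone (Set.mem_image_of_mem _ hβ) with hβ_pos | hβ_neg
  · obtain ⟨n, hn⟩ := exists_nsmul_sum_eq_of_mem_nnspan _ hβ_pos
    exact key hβ hn
  · obtain ⟨n, hn⟩ := exists_nsmul_sum_eq_of_mem_nnspan _ (Set.mem_neg.1 hβ_neg)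
    obtain ⟨w, hw, α, hα, γ, hγR, hγ, hwγ⟩ := key (neg_mem_R hβ) (by rw [map_neg, hn])
    exact ⟨w, hw, α, hα, -γ, neg_mem_R hγR, neg_mem hγ, by rw [map_neg, hwγ, neg_neg]⟩

end Conjugation

theorem stmt9_general {V : Type*} [AddCommGroup V] [Module ℝ V]
    (B : LinearMap.BilinForm ℝ V) (R : Set V) (l : ℕ)
    (hE : IsEARS B R l 2)
    (P : Set V) (a : V) (hfs : IsFundamentalSet B R l P a)
    (k : V → ℕ) (g : V → Bool) (hkg : IsKG R a P k g) :
    R = kgUnion B P a k g := by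
  obtain ⟨-, haa, -, hPR, hPfin, hPcard, hbase⟩ := hfs
  have ha : a ∈ LinearMap.ker B := by
    rw [← SetLike.mem_coe, ← hE.null_eq]
    exact haa
  have hPa : ∀ α ∈ P, B α a = 0 := fun α _ => by
    rw [hE.symm, LinearMap.mem_ker.1 ha, LinearMap.zero_apply]
  have hpos : ∀ β ∈ R, 0 < B β β := fun β hβ =>
    (hE.posSemidef β).lt_of_ne' (hE.root_nonisotropic β hβ)
  ext β
  rw [mem_kgUnion_iff (fun α hα => hE.root_nonisotropic α (hPR hα)) hPa]
  constructor
  · intro hβ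
    obtain ⟨w, hw, α, hα, γ, hγR, hγ, rfl⟩ := exists_weyl_apply_eq hpos hE.integral hE.reflect
      (Submodule.span_le.2 (Set.singleton_subset_iff.2 ha)) hPR hPfin
      (hbase.linearIndependent_restrict hPfin hPcard) hbase.subset_union_neg hβ
    refine ⟨w, hw, α, hα, γ, ?_, rfl⟩
    rw [← (hkg α hα).2, Submodule.span_insert]
    exact ⟨hγR, hγ⟩
  · rintro ⟨w, hw, α, hα, γ, hγ, rfl⟩
    rw [← (hkg α hα).2] at hγ
    exact weyl_mapsTo (fun α hα => hE.reflect α (hPR hα)) hw hγ.1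

/-- `R = ⋃_{w ∈ W_Π} ⋃_{α ∈ Π} ((w(α) + ℤk(α)a) ∪ (w(2α) + g(α)k(α)a))`. -/
theorem stmt9 {V : Type*} [AddCommGroup V] [Module ℝ V]
    (B : LinearMap.BilinForm ℝ V) (R : Set V) (l : ℕ)
    (hE : IsEARS B R l 2) (hred : IsReducedRS R)
    (P : Set V) (a : V) (hfs : IsFundamentalSet B R l P a)
    (k : V → ℕ) (g : V → Bool) (hkg : IsKG R a P k g) :
    R = kgUnion B P a k g :=
  stmt9_general B R l hE P a hfs k g hkg
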